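/- arXiv:1909.08826 — 9 statements merged into one kernel-verified Lean document; each statement's English description precedes it below -/
import Mathlib

section
/- In the category Preord of preordered sets and monotone maps, for every preordered set (A, ρ) the quotient map π_A : (A, ρ) → (A/∼_ρ, π(ρ)) onto its antisymmetrization is a regular epimorphism, and moreover every pullback in Preord of π_A along an arbitrary monotone map is again a regular epimorphism. (Thus the full subcategory PartOrd of partially ordered sets is a (regular epi)-reflective subcategory of Preord, with units the maps π_A.) -/
/-!
Choosing a representative of each `∼`-class gives a monotone section of `π_A`, so `π_A` is a
split epimorphism. Split epimorphisms are regular, and a pullback of a split epimorphism is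
split: pull the section back along the universal property.
-/

universe u

open CategoryTheory

namespace CategoryTheory.IsPullback

variable {C : Type*} [Category C] {P X Y Z : C} {fst : P ⟶ X} {snd : P ⟶ Y} {f : X ⟶ Z}
  {g : Y ⟶ Z}

theorem isSplitEpi_fst (h : IsPullback fst snd f g) [IsSplitEpi g] : IsSplitEpi fst :=
  IsSplitEpi.mk' ⟨h.lift (𝟙 X) (f ≫ section_ g) (by simp), h.lift_fst _ _ _⟩

end CategoryTheory.IsPullback

namespace Preord

noncomputable def ofAntisymmetrizationHom (A : Preord.{u}) :
    of (Antisymmetrization A (· ≤ ·)) ⟶ A :=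
  ofHom (OrderEmbedding.ofAntisymmetrization A).toOrderHom

theorem isSplitEpi_of_coe_eq_toAntisymmetrization {A : Preord.{u}}
    (π : A ⟶ of (Antisymmetrization A (· ≤ ·)))
    (hπ : ⇑π.hom = toAntisymmetrization (· ≤ ·)) : IsSplitEpi π :=
  IsSplitEpi.mk' ⟨ofAntisymmetrizationHom A, by
    ext x
    change π.hom (ofAntisymmetrization _ x) = x
    rw [hπ, toAntisymmetrization_ofAntisymmetrization]⟩

end Preord

/-- For every preordered set `A`, the antisymmetrization quotient map
`π_A : A → A/∼` is a regular epimorphism in `Preord`, and every pullback of `π_A`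
along an arbitrary monotone map is again a regular epimorphism. -/
theorem stmt2 (A : Preord.{u}) :
    ∀ π : A ⟶ Preord.of (Antisymmetrization A (· ≤ ·)),
      (⇑(show A →o Antisymmetrization A (· ≤ ·) from π.hom) = toAntisymmetrization (· ≤ ·)) →
      Nonempty (RegularEpi π) ∧
        ∀ (C P : Preord.{u}) (g : C ⟶ Preord.of (Antisymmetrization A (· ≤ ·)))
          (p₁ : P ⟶ C) (p₂ : P ⟶ A),
          IsPullback p₁ p₂ g π → Nonempty (RegularEpi p₁) := by
  intro π hπ
  have := Preord.isSplitEpi_of_coe_eq_toAntisymmetrization π hπ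
  refine ⟨⟨.ofSplitEpi π⟩, fun C P g p₁ p₂ hpb => ?_⟩
  have := hpb.isSplitEpi_fst
  exact ⟨.ofSplitEpi p₁⟩
end

section
/- The reflector F : Preord → PartOrd (antisymmetrization) has stable units. Concretely: let (X, ρ) and (Z, σ) be preordered sets, let π_X : X → X/∼_ρ be the antisymmetrization quotient map, and let φ : Z → X/∼_ρ be any monotone map into the antisymmetrization of X. Form the pullback P = {(x, z) ∈ X × Z | π_X(x) = φ(z)}, equipped with the componentwise preorder. Then the monotone map between antisymmetrizations P/∼ → Z/∼_σ induced by the second projection (x, z) ↦ z is an order isomorphism; equivalently, F sends this pullback square to a pullback square in PartOrd. -/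
/-!
In the pullback the first coordinate `x` is determined up to equivalence by the second, since
`[x] = φ z`. Hence the second projection preserves and reflects the preorder and is surjective,
and any such map induces an order isomorphism of antisymmetrizations.
-/

universe u

section OrderIsoOfLEIff

variable {α β : Type*} [Preorder α] [Preorder β]

noncomputable def Antisymmetrization.orderIsoOfLEIff (f : α → β)
    (hf : ∀ a b, f a ≤ f b ↔ a ≤ b) (hs : Function.Surjective f) :
    Antisymmetrization α (· ≤ ·) ≃o Antisymmetrization β (· ≤ ·) :=
  let g : α →o β := ⟨f, fun a b => (hf a b).2⟩
  OrderIso.ofSurjective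
    (OrderEmbedding.ofMapLEIff g.antisymmetrization fun a b => by
      induction a using Antisymmetrization.ind
      induction b using Antisymmetrization.ind
      simp only [OrderHom.antisymmetrization_apply_mk,
        toAntisymmetrization_le_toAntisymmetrization_iff]
      exact hf _ _)
    fun b => by
      induction b using Antisymmetrization.ind with
      | _ b =>
        obtain ⟨a, rfl⟩ := hs b
        exact ⟨toAntisymmetrization _ a, rfl⟩

theorem Antisymmetrization.orderIsoOfLEIff_apply_mk (f : α → β)
    (hf : ∀ a b, f a ≤ f b ↔ a ≤ b) (hs : Function.Surjective f) (a : α) :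
    orderIsoOfLEIff f hf hs (toAntisymmetrization _ a) = toAntisymmetrization _ (f a) :=
  rfl

end OrderIsoOfLEIff

section Pullback

variable {X Z : Type u} [Preorder X] [Preorder Z] {φ : Z →o Antisymmetrization X (· ≤ ·)}

theorem pullback_snd_le_snd_iff
    (p q : {p : X × Z // @toAntisymmetrization X (· ≤ ·) _ p.1 = φ p.2}) :
    p.1.2 ≤ q.1.2 ↔ p ≤ q := by
  refine ⟨fun h => ⟨?_, h⟩, fun h => h.2⟩
  rw [← toAntisymmetrization_le_toAntisymmetrization_iff, p.2, q.2]
  exact φ.mono h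

theorem pullback_snd_surjective :
    Function.Surjective
      fun p : {p : X × Z // @toAntisymmetrization X (· ≤ ·) _ p.1 = φ p.2} => p.1.2 :=
  fun z => ⟨⟨(ofAntisymmetrization _ (φ z), z),
    toAntisymmetrization_ofAntisymmetrization _ _⟩, rfl⟩

end Pullback

/-- The antisymmetrization reflector `Preord → PartOrd` has stable units: for preordered
sets `X`, `Z` and a monotone map `φ : Z → X/∼`, the monotone map between antisymmetrizations
induced by the second projection of the pullback
`P = {(x, z) | π_X x = φ z}` (with componentwise preorder) is an order isomorphism. -/
theorem stmt3 {X Z : Type u} [Preorder X] [Preorder Z]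
    (φ : Z →o Antisymmetrization X (· ≤ ·)) :
    ∃ e : Antisymmetrization {p : X × Z // @toAntisymmetrization X (· ≤ ·) _ p.1 = φ p.2}
          (· ≤ ·) ≃o Antisymmetrization Z (· ≤ ·),
      ∀ p : {p : X × Z // @toAntisymmetrization X (· ≤ ·) _ p.1 = φ p.2},
        e (toAntisymmetrization (· ≤ ·) p) = @toAntisymmetrization Z (· ≤ ·) _ p.1.2 :=
  ⟨Antisymmetrization.orderIsoOfLEIff _ pullback_snd_le_snd_iff pullback_snd_surjective,
    Antisymmetrization.orderIsoOfLEIff_apply_mk _ _ _⟩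
end

section
/- Let f : (A, ρ) → (B, σ) be a monotone map of preordered sets. The commutative naturality square in Preord with top edge f, vertical edges the antisymmetrization quotient maps π_A : A → A/∼_ρ and π_B : B → B/∼_σ, and bottom edge the induced map F(f) : A/∼_ρ → B/∼_σ, is a pullback square in the category Preord if and only if the pair of maps (f, f̂) : (A, ∼_ρ) → (B, ∼_σ) is a discrete fibration of equivalence relations, i.e., for every a ∈ A and every b ∈ B with b ∼_σ f(a) there exists a unique a' ∈ A such that a' ∼_ρ a and f(a') = b. -/
universe u

open CategoryTheory Limits

/-!
Elements of a pullback in `Preord` are detected by morphisms out of the one-point preorder, so a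
pullback square is a bijection onto `X ×_Z Y`; conversely such a bijection whose two legs jointly
reflect the order is a pullback. For the naturality square the quotient map `π_A` alone reflects
the order, and the pairs `([a], b)` of `A/∼ ×_{B/∼} B` are those with `b ∼ f a`, so bijectivity
is exactly the discrete fibration condition.
-/

theorem toAntisymmetrization_eq_toAntisymmetrization_iff {α : Type*} {r : α → α → Prop}
    [IsPreorder α r] {a b : α} :
    toAntisymmetrization r a = toAntisymmetrization r b ↔ AntisymmRel r a b :=
  Quotient.eq

namespace Preord

variable {P X Y Z : Preord.{u}} {fst : P ⟶ X} {snd : P ⟶ Y} {f : X ⟶ Z} {g : Y ⟶ Z}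

abbrev point (x : X) : of PUnit.{u + 1} ⟶ X := ofHom ⟨fun _ => x, monotone_const⟩

theorem point_injective : Function.Injective (point (X := X)) := fun _ _ h =>
  congrArg (fun k : of PUnit ⟶ X => k PUnit.unit) h

theorem existsUnique_of_isPullback (hP : IsPullback fst snd f g) {x : X} {y : Y}
    (hxy : f x = g y) : ∃! p : P, fst p = x ∧ snd p = y := by
  obtain ⟨k, hk₁, hk₂⟩ := hP.exists_lift (point x) (point y) (congrArg point hxy)
  refine ⟨k PUnit.unit, ⟨point_injective hk₁, point_injective hk₂⟩, ?_⟩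
  rintro p ⟨rfl, rfl⟩
  exact point_injective (hP.hom_ext hk₁.symm hk₂.symm)

theorem isPullback_of_existsUnique (w : fst ≫ f = snd ≫ g)
    (le_of_le : ∀ p p' : P, fst p ≤ fst p' → snd p ≤ snd p' → p ≤ p')
    (h : ∀ (x : X) (y : Y), f x = g y → ∃! p : P, fst p = x ∧ snd p = y) :
    IsPullback fst snd f g := by
  choose lift lift_spec lift_unique using h
  have cond (s : PullbackCone f g) (t : s.pt) : f (s.fst t) = g (s.snd t) :=
    ConcreteCategory.congr_hom s.condition t
  refine ⟨⟨w⟩, ⟨PullbackCone.IsLimit.mk w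
    (fun s => ofHom ⟨fun t => lift _ _ (cond s t), fun t t' htt' => le_of_le _ _ ?_ ?_⟩)
    (fun s => ext fun t => (lift_spec _ _ (cond s t)).1)
    (fun s => ext fun t => (lift_spec _ _ (cond s t)).2)
    (fun s m hm₁ hm₂ => ext fun t => lift_unique _ _ (cond s t) _
      ⟨ConcreteCategory.congr_hom hm₁ t, ConcreteCategory.congr_hom hm₂ t⟩)⟩⟩
  · rw [(lift_spec _ _ (cond s t)).1, (lift_spec _ _ (cond s t')).1]
    exact s.fst.hom.monotone htt'
  · rw [(lift_spec _ _ (cond s t)).2, (lift_spec _ _ (cond s t')).2]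
    exact s.snd.hom.monotone htt'

end Preord

/-- The naturality square of the antisymmetrization unit at a monotone map
`f : (A, ρ) → (B, σ)` is a pullback square in `Preord` if and only if
`(f, f̂) : (A, ∼_ρ) → (B, ∼_σ)` is a discrete fibration of equivalence relations. -/
theorem stmt5 {A B : Type u} [Preorder A] [Preorder B] (f : A →o B) :
    IsPullback (C := Preord.{u})
      (show Preord.of A ⟶ Preord.of (Antisymmetrization A (· ≤ ·)) from
        Preord.ofHom ⟨toAntisymmetrization (· ≤ ·), toAntisymmetrization_mono⟩)
      (show Preord.of A ⟶ Preord.of B from Preord.ofHom f)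
      (show Preord.of (Antisymmetrization A (· ≤ ·)) ⟶
          Preord.of (Antisymmetrization B (· ≤ ·)) from Preord.ofHom f.antisymmetrization)
      (show Preord.of B ⟶ Preord.of (Antisymmetrization B (· ≤ ·)) from
        Preord.ofHom ⟨toAntisymmetrization (· ≤ ·), toAntisymmetrization_mono⟩) ↔
    ∀ (a : A) (b : B), AntisymmRel (· ≤ ·) b (f a) →
      ∃! a' : A, AntisymmRel (· ≤ ·) a' a ∧ f a' = b := by
  constructor
  · intro hP a b hb
    have hlift := Preord.existsUnique_of_isPullback hP (x := toAntisymmetrization (· ≤ ·) a)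
      (y := b) (toAntisymmetrization_eq_toAntisymmetrization_iff.2 hb.symm)
    simpa only [ConcreteCategory.hom_ofHom, OrderHom.coe_mk,
      toAntisymmetrization_eq_toAntisymmetrization_iff] using hlift
  · intro H
    refine Preord.isPullback_of_existsUnique (Preord.ext fun _ => rfl)
      (fun _ _ h _ => toAntisymmetrization_le_toAntisymmetrization_iff.1 h) ?_
    intro x b hxb
    induction x using Antisymmetrization.ind with | _ a => ?_
    have hfib := H a b (toAntisymmetrization_eq_toAntisymmetrization_iff.1 hxb).symm
    simpa only [ConcreteCategory.hom_ofHom, OrderHom.coe_mk,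
      toAntisymmetrization_eq_toAntisymmetrization_iff] using hfib
end

section
/- For every preordered set (B, σ) there exist a partially ordered set (A, ≤) and a surjective monotone map p : A → B with the following lifting property: for all b₁, b₂, b₃ ∈ B with b₁ σ b₂ and b₂ σ b₃, there exist e₁, e₂, e₃ ∈ A such that e₁ ≤ e₂, e₂ ≤ e₃, and p(eᵢ) = bᵢ for i = 1, 2, 3. (This lifting property characterizes effective descent morphisms in the category of preordered sets; hence every preordered set is covered by a partially ordered set via an effective descent morphism.) -/
/-!
Take `A = B × ℕ`, where `(b, m) < (b', n)` means `b σ b'` and `m < n`. The strict increase of the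
level makes this relation irreflexive, so its reflexive closure is a partial order even though `σ`
is only a preorder, and `Prod.fst` is a surjective monotone map. A chain `b₁ σ b₂ σ b₃` lifts to
`(b₁, 0) ≤ (b₂, 1) ≤ (b₃, 2)`.
-/

universe u

variable {B : Type u}

def levelLT (r : B → B → Prop) (a a' : B × ℕ) : Prop :=
  r a.1 a'.1 ∧ a.2 < a'.2

instance isStrictOrder_levelLT (r : B → B → Prop) [IsTrans B r] :
    IsStrictOrder (B × ℕ) (levelLT r) where
  irrefl _ h := lt_irrefl _ h.2
  trans _ _ _ h h' := ⟨trans_of r h.1 h'.1, h.2.trans h'.2⟩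

theorem levelLT_of_rel {r : B → B → Prop} {b b' : B} (h : r b b') (n : ℕ) :
    levelLT r (b, n) (b', n + 1) :=
  ⟨h, n.lt_succ_self⟩

theorem rel_fst_of_eq_or_levelLT {r : B → B → Prop} [Std.Refl r] {a a' : B × ℕ}
    (h : a = a' ∨ levelLT r a a') : r a.1 a'.1 := by
  rcases h with rfl | h
  · exact refl_of r _
  · exact h.1

/-- Every preordered set `(B, σ)` admits a surjective monotone map `p : (A, ≤) → (B, σ)`
from a partially ordered set satisfying the lifting property characterizing effective
descent morphisms in `Preord`: any chain `b₁ σ b₂ σ b₃` lifts to a chain `e₁ ≤ e₂ ≤ e₃`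
with `p eᵢ = bᵢ`. -/
theorem stmt7 {B : Type u} (σ : B → B → Prop)
    (hσrefl : Reflexive σ) (hσtrans : Transitive σ) :
    ∃ (A : Type u) (le : A → A → Prop),
      Reflexive le ∧ Transitive le ∧ AntiSymmetric le ∧
      ∃ p : A → B, Function.Surjective p ∧
        (∀ a a' : A, le a a' → σ (p a) (p a')) ∧
        ∀ b₁ b₂ b₃ : B, σ b₁ b₂ → σ b₂ b₃ →
          ∃ e₁ e₂ e₃ : A, le e₁ e₂ ∧ le e₂ e₃ ∧ p e₁ = b₁ ∧ p e₂ = b₂ ∧ p e₃ = b₃ := by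
  have : Std.Refl σ := ⟨hσrefl⟩
  have : IsTrans B σ := ⟨fun _ _ _ => @hσtrans _ _ _⟩
  let _ : PartialOrder (B × ℕ) := partialOrderOfSO (levelLT σ)
  refine ⟨B × ℕ, (· ≤ ·), le_refl, fun _ _ _ => le_trans, fun _ _ => le_antisymm,
    Prod.fst, fun b => ⟨(b, 0), rfl⟩, fun _ _ => rel_fst_of_eq_or_levelLT, ?_⟩
  intro b₁ b₂ b₃ h₁₂ h₂₃
  exact ⟨(b₁, 0), (b₂, 1), (b₃, 2), Or.inr (levelLT_of_rel h₁₂ 0), Or.inr (levelLT_of_rel h₂₃ 1),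
    rfl, rfl, rfl⟩
end

section
/- Let f : (A, ρ) → (B, σ) be a monotone map of preordered sets. Then the following are equivalent: (i) for every b ∈ B, the fibre f⁻¹(b) with the induced preorder is a partially ordered set; (ii) there exist a partially ordered set (E, ≤) and a surjective monotone map p : E → B satisfying the lifting property (for all b₁ σ b₂ σ b₃ in B there exist e₁ ≤ e₂ ≤ e₃ in E with p(eᵢ) = bᵢ), such that the pullback E ×_B A = {(e, a) ∈ E × A | p(e) = f(a)}, equipped with the componentwise preorder, is a partially ordered set. (Condition (i) characterizes the coverings with respect to the reflection of preordered sets onto partially ordered sets.) -/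
/-!
If the fibres of `f` are partially ordered, take `E = Fin 3 × B`, where `(i, b) ≤ (j, b')` means
equality or `i < j` and `b σ b'`: the level index makes this antisymmetric, and a chain
`b₁ σ b₂ σ b₃` lifts to the three levels. Two comparable pairs of the pullback then share
their `E`-component, so their `A`-components lie in one fibre and coincide. Conversely, a fibre
over `b = p e` embeds into the pullback as `a ↦ (e, a)`, so it inherits antisymmetry.
-/

universe u

variable {A B E : Type*}

def LevelRel (ι : Type*) [Preorder ι] (σ : B → B → Prop) (x y : ι × B) : Prop :=
  x = y ∨ x.1 < y.1 ∧ σ x.2 y.2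

namespace LevelRel

variable {ι : Type*} [Preorder ι] {σ : B → B → Prop}

theorem refl (x : ι × B) : LevelRel ι σ x x :=
  Or.inl rfl

theorem trans (hσ : ∀ ⦃a b c⦄, σ a b → σ b c → σ a c) {x y z : ι × B} :
    LevelRel ι σ x y → LevelRel ι σ y z → LevelRel ι σ x z := by
  rintro (rfl | ⟨hxy, hσxy⟩) (rfl | ⟨hyz, hσyz⟩)
  · exact Or.inl rfl
  · exact Or.inr ⟨hyz, hσyz⟩
  · exact Or.inr ⟨hxy, hσxy⟩
  · exact Or.inr ⟨hxy.trans hyz, hσ hσxy hσyz⟩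

theorem antisymm {x y : ι × B} : LevelRel ι σ x y → LevelRel ι σ y x → x = y := by
  rintro (rfl | ⟨hxy, -⟩) (h | ⟨hyx, -⟩)
  · rfl
  · rfl
  · exact h.symm
  · exact absurd hyx hxy.asymm

theorem snd (hσ : ∀ b, σ b b) {x y : ι × B} (h : LevelRel ι σ x y) : σ x.2 y.2 := by
  rcases h with rfl | ⟨-, h⟩
  exacts [hσ _, h]

theorem of_lt {i j : ι} {b b' : B} (hij : i < j) (h : σ b b') : LevelRel ι σ (i, b) (j, b') :=
  Or.inr ⟨hij, h⟩

end LevelRel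

def PullbackRel (le : E → E → Prop) (ρ : A → A → Prop) (p : E → B) (f : A → B)
    (q q' : {x : E × A // p x.1 = f x.2}) : Prop :=
  le q.1.1 q'.1.1 ∧ ρ q.1.2 q'.1.2

section Pullback

variable {le : E → E → Prop} {ρ : A → A → Prop} {p : E → B} {f : A → B}

theorem pullbackRel_antisymm (hle : ∀ e e', le e e' → le e' e → e = e')
    (hfib : ∀ b, ∀ a a' : {x : A // f x = b}, ρ a a' → ρ a' a → a = a') :
    ∀ q q', PullbackRel le ρ p f q q' → PullbackRel le ρ p f q' q → q = q' := by
  rintro ⟨⟨e, a⟩, hq⟩ ⟨⟨e', a'⟩, hq'⟩ ⟨hee', haa'⟩ ⟨he'e, ha'a⟩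
  obtain rfl : e = e' := hle e e' hee' he'e
  have : (⟨a, rfl⟩ : {x // f x = f a}) = ⟨a', hq'.symm.trans hq⟩ := hfib _ _ _ haa' ha'a
  cases congrArg Subtype.val this
  rfl

theorem fibre_antisymm_of_pullbackRel (hle : ∀ e, le e e) (hp : Function.Surjective p)
    (hpb : ∀ q q', PullbackRel le ρ p f q q' → PullbackRel le ρ p f q' q → q = q') (b : B) :
    ∀ a a' : {x : A // f x = b}, ρ a a' → ρ a' a → a = a' := by
  obtain ⟨e, rfl⟩ := hp b
  rintro ⟨a, ha⟩ ⟨a', ha'⟩ haa' ha'a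
  have := hpb ⟨(e, a), ha.symm⟩ ⟨(e, a'), ha'.symm⟩ ⟨hle e, haa'⟩ ⟨hle e, ha'a⟩
  exact Subtype.ext (congrArg (·.1.2) this)

end Pullback

theorem stmt9_general {A B : Type u} (ρ : A → A → Prop) (σ : B → B → Prop)
    (hσrefl : Reflexive σ) (hσtrans : Transitive σ)
    (f : A → B) :
    (∀ b : B, ∀ a a' : {x : A // f x = b}, ρ a.1 a'.1 → ρ a'.1 a.1 → a = a') ↔
      ∃ (E : Type u) (le : E → E → Prop),
        Reflexive le ∧ Transitive le ∧ AntiSymmetric le ∧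
        ∃ p : E → B, Function.Surjective p ∧
          (∀ e e' : E, le e e' → σ (p e) (p e')) ∧
          (∀ b₁ b₂ b₃ : B, σ b₁ b₂ → σ b₂ b₃ →
            ∃ e₁ e₂ e₃ : E, le e₁ e₂ ∧ le e₂ e₃ ∧ p e₁ = b₁ ∧ p e₂ = b₂ ∧ p e₃ = b₃) ∧
          ∀ q q' : {x : E × A // p x.1 = f x.2},
            (le q.1.1 q'.1.1 ∧ ρ q.1.2 q'.1.2) → (le q'.1.1 q.1.1 ∧ ρ q'.1.2 q.1.2) →
              q = q' := by
  constructor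
  · intro hfib
    refine ⟨Fin 3 × B, LevelRel (Fin 3) σ, LevelRel.refl, fun _ _ _ => LevelRel.trans hσtrans,
      fun _ _ => LevelRel.antisymm, Prod.snd, Prod.snd_surjective,
      fun _ _ => LevelRel.snd hσrefl, fun b₁ b₂ b₃ h₁₂ h₂₃ => ⟨(0, b₁), (1, b₂), (2, b₃),
        LevelRel.of_lt (by decide) h₁₂, LevelRel.of_lt (by decide) h₂₃, rfl, rfl, rfl⟩,
      pullbackRel_antisymm (fun _ _ => LevelRel.antisymm) hfib⟩
  · rintro ⟨E, le, hle, -, -, p, hp, -, -, hpb⟩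
    exact fibre_antisymm_of_pullbackRel hle hp hpb

/-- A monotone map `f : (A, ρ) → (B, σ)` of preordered sets has all fibres partially
ordered if and only if there is a partially ordered set `(E, ≤)` and a surjective monotone
map `p : E → B` with the effective-descent lifting property, such that the pullback
`E ×_B A` with the componentwise preorder is a partially ordered set. -/
theorem stmt9 {A B : Type u} (ρ : A → A → Prop) (σ : B → B → Prop)
    (hρrefl : Reflexive ρ) (hρtrans : Transitive ρ)
    (hσrefl : Reflexive σ) (hσtrans : Transitive σ)
    (f : A → B) (hf : ∀ a a' : A, ρ a a' → σ (f a) (f a')) :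
    (∀ b : B, ∀ a a' : {x : A // f x = b}, ρ a.1 a'.1 → ρ a'.1 a.1 → a = a') ↔
      ∃ (E : Type u) (le : E → E → Prop),
        Reflexive le ∧ Transitive le ∧ AntiSymmetric le ∧
        ∃ p : E → B, Function.Surjective p ∧
          (∀ e e' : E, le e e' → σ (p e) (p e')) ∧
          (∀ b₁ b₂ b₃ : B, σ b₁ b₂ → σ b₂ b₃ →
            ∃ e₁ e₂ e₃ : E, le e₁ e₂ ∧ le e₂ e₃ ∧ p e₁ = b₁ ∧ p e₂ = b₂ ∧ p e₃ = b₃) ∧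
          ∀ q q' : {x : E × A // p x.1 = f x.2},
            (le q.1.1 q'.1.1 ∧ ρ q.1.2 q'.1.2) → (le q'.1.1 q.1.1 ∧ ρ q'.1.2 q.1.2) →
              q = q' :=
  stmt9_general ρ σ hσrefl hσtrans f
end

section
/- Let f : (A, ρ) → (B, σ) be a monotone map of preordered sets. Let ≈ be the equivalence relation on A defined by a ≈ a' iff f(a) = f(a'), a ρ a' and a' ρ a, let Q = A/≈ with the image preorder e(ρ) (i.e., [a] e(ρ) [a'] iff a ρ a'), let e : A → Q be the quotient map, and let m : Q → B be the unique map with m ∘ e = f. Then: (1) e is a surjective, fully faithful monotone map; (2) m is monotone and every fibre m⁻¹(b) of m, with the preorder induced from e(ρ), is a partially ordered set. (This gives the monotone-light factorization f = m ∘ e of an arbitrary morphism of preordered sets.) -/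
namespace Quotient

variable {A B : Type*} {ρ : A → A → Prop} {σ : B → B → Prop} {s : Setoid A}
  {eρ : Quotient s → Quotient s → Prop} {f : A → B} {m : Quotient s → B}

theorem rel_of_rel_mk (hf : ∀ a a' : A, ρ a a' → σ (f a) (f a'))
    (heρ : ∀ a a' : A, eρ (Quotient.mk s a) (Quotient.mk s a') → ρ a a')
    (hm : ∀ a : A, m (Quotient.mk s a) = f a) (q q' : Quotient s) (h : eρ q q') :
    σ (m q) (m q') := by
  induction q, q' using Quotient.inductionOn₂ with
  | h a a' => simpa only [hm] using hf a a' (heρ a a' h)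

theorem eq_of_rel_of_rel_of_eq
    (hs : ∀ a a' : A, f a = f a' → ρ a a' → ρ a' a → s.r a a')
    (heρ : ∀ a a' : A, eρ (Quotient.mk s a) (Quotient.mk s a') → ρ a a')
    (hm : ∀ a : A, m (Quotient.mk s a) = f a) {q q' : Quotient s} (hmq : m q = m q')
    (h : eρ q q') (h' : eρ q' q) : q = q' := by
  induction q, q' using Quotient.inductionOn₂ with
  | h a a' =>
    rw [hm, hm] at hmq
    exact Quotient.sound (hs a a' hmq (heρ a a' h) (heρ a' a h'))

end Quotient

theorem stmt12_general {A B : Type*} (ρ : A → A → Prop) (σ : B → B → Prop)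
    (f : A → B) (hf : ∀ a a' : A, ρ a a' → σ (f a) (f a'))
    (s : Setoid A) (hs : ∀ a a' : A, s.r a a' ↔ (f a = f a' ∧ ρ a a' ∧ ρ a' a))
    (eρ : Quotient s → Quotient s → Prop)
    (heρ : ∀ a a' : A, eρ (Quotient.mk s a) (Quotient.mk s a') ↔ ρ a a')
    (m : Quotient s → B) (hm : ∀ a : A, m (Quotient.mk s a) = f a) :
    Function.Surjective (Quotient.mk s) ∧
      (∀ a a' : A, ρ a a' ↔ eρ (Quotient.mk s a) (Quotient.mk s a')) ∧
      (∀ q q' : Quotient s, eρ q q' → σ (m q) (m q')) ∧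
      ∀ b : B, ∀ q q' : {x : Quotient s // m x = b},
        eρ q.1 q'.1 → eρ q'.1 q.1 → q = q' := by
  have heρ' a a' := (heρ a a').mp
  refine ⟨Quotient.mk_surjective, fun a a' => (heρ a a').symm,
    Quotient.rel_of_rel_mk hf heρ' hm, fun b q q' h h' => Subtype.ext ?_⟩
  exact Quotient.eq_of_rel_of_rel_of_eq (fun a a' hfa hρ hρ' => (hs a a').mpr ⟨hfa, hρ, hρ'⟩)
    heρ' hm (q.2.trans q'.2.symm) h h'

/-- Canonical monotone-light factorization `f = m ∘ e` of a monotone map of preordered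
sets: `e : A → A/≈` (where `a ≈ a'` iff `f a = f a'`, `a ρ a'` and `a' ρ a`) is a
surjective fully faithful monotone map, and the induced map `m : A/≈ → B` is monotone
with all fibres partially ordered. -/
theorem stmt12 {A B : Type*} (ρ : A → A → Prop) (σ : B → B → Prop)
    (hρrefl : Reflexive ρ) (hρtrans : Transitive ρ)
    (hσrefl : Reflexive σ) (hσtrans : Transitive σ)
    (f : A → B) (hf : ∀ a a' : A, ρ a a' → σ (f a) (f a'))
    (s : Setoid A) (hs : ∀ a a' : A, s.r a a' ↔ (f a = f a' ∧ ρ a a' ∧ ρ a' a))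
    (eρ : Quotient s → Quotient s → Prop)
    (heρ : ∀ a a' : A, eρ (Quotient.mk s a) (Quotient.mk s a') ↔ ρ a a')
    (m : Quotient s → B) (hm : ∀ a : A, m (Quotient.mk s a) = f a) :
    Function.Surjective (Quotient.mk s) ∧
      (∀ a a' : A, ρ a a' ↔ eρ (Quotient.mk s a) (Quotient.mk s a')) ∧
      (∀ q q' : Quotient s, eρ q q' → σ (m q) (m q')) ∧
      ∀ b : B, ∀ q q' : {x : Quotient s // m x = b},
        eρ q.1 q'.1 → eρ q'.1 q.1 → q = q' :=
  stmt12_general ρ σ f hf s hs eρ heρ m hm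
end

section
/- Surjective fully faithful monotone maps are orthogonal to monotone maps with partially ordered fibres: given a commutative square m ∘ u = v ∘ e of monotone maps of preordered sets, where e : (A, ρ) → (B, σ) is surjective and fully faithful, and m : (C, τ) → (D, ψ) is such that every fibre m⁻¹(d) with the induced preorder is a partially ordered set, there exists a unique monotone map α : (B, σ) → (C, τ) with α ∘ e = u and m ∘ α = v. (Together with the canonical factorization, this shows that the classes (surjective fully faithful maps, maps with partially ordered fibres) form the monotone-light factorization system on Preord induced by the reflection onto PartOrd.) -/
/-! A monotone diagonal must be `u ∘ s` for any section `s` of `e`. It is well defined because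
`e a = e a'` makes `a` and `a'` equivalent (`e` is fully faithful), so `u a` and `u a'` are
equivalent points of one fibre of `m`, hence equal. -/

open Function

section FullyFaithful

variable {A B C D : Type*} {ρ : A → A → Prop} {σ : B → B → Prop} {τ : C → C → Prop}
  {e : A → B} {m : C → D} {u : A → C} {v : B → D}

theorem rel_of_fullyFaithful_of_eq (hσrefl : ∀ b, σ b b)
    (heff : ∀ a a' : A, ρ a a' ↔ σ (e a) (e a')) {a a' : A} (h : e a = e a') : ρ a a' :=
  (heff a a').mpr (h ▸ hσrefl (e a))

theorem factorsThrough_of_fullyFaithful_of_antisymm_fibres (hσrefl : ∀ b, σ b b)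
    (heff : ∀ a a' : A, ρ a a' ↔ σ (e a) (e a'))
    (hmfib : ∀ c c' : C, m c = m c' → τ c c' → τ c' c → c = c')
    (hu : ∀ a a' : A, ρ a a' → τ (u a) (u a'))
    (hcomm : ∀ a : A, m (u a) = v (e a)) :
    FactorsThrough u e := fun a a' h =>
  hmfib _ _ (by rw [hcomm, hcomm, h])
    (hu _ _ (rel_of_fullyFaithful_of_eq hσrefl heff h))
    (hu _ _ (rel_of_fullyFaithful_of_eq hσrefl heff h.symm))

theorem rel_comp_surjInv_of_fullyFaithful (hesurj : Surjective e)
    (heff : ∀ a a' : A, ρ a a' ↔ σ (e a) (e a'))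
    (hu : ∀ a a' : A, ρ a a' → τ (u a) (u a')) {b b' : B} (h : σ b b') :
    τ (u (surjInv hesurj b)) (u (surjInv hesurj b')) :=
  hu _ _ ((heff _ _).mpr (by rwa [surjInv_eq hesurj, surjInv_eq hesurj]))

end FullyFaithful

theorem stmt13_general {A B C D : Type*}
    (ρ : A → A → Prop) (σ : B → B → Prop) (τ : C → C → Prop)
    (hσrefl : Reflexive σ)
    (e : A → B) (hesurj : Function.Surjective e)
    (heff : ∀ a a' : A, ρ a a' ↔ σ (e a) (e a'))
    (m : C → D)
    (hmfib : ∀ c c' : C, m c = m c' → τ c c' → τ c' c → c = c')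
    (u : A → C) (hu : ∀ a a' : A, ρ a a' → τ (u a) (u a'))
    (v : B → D)
    (hcomm : ∀ a : A, m (u a) = v (e a)) :
    ∃! α : B → C, (∀ b b' : B, σ b b' → τ (α b) (α b')) ∧
      (∀ a : A, α (e a) = u a) ∧ ∀ b : B, m (α b) = v b := by
  have hfac : FactorsThrough u e :=
    factorsThrough_of_fullyFaithful_of_antisymm_fibres hσrefl heff hmfib hu hcomm
  have hlift (a : A) : u (surjInv hesurj (e a)) = u a := hfac (surjInv_eq hesurj (e a))
  refine ⟨u ∘ surjInv hesurj,
    ⟨fun b b' => rel_comp_surjInv_of_fullyFaithful hesurj heff hu, hlift,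
      fun b => (hcomm _).trans (congrArg v (surjInv_eq hesurj b))⟩, ?_⟩
  rintro α ⟨-, hαe, -⟩
  exact hesurj.injective_comp_right (funext fun a => (hαe a).trans (hlift a).symm)

/-- Surjective fully faithful monotone maps are orthogonal to monotone maps with partially
ordered fibres: in any commutative square `m ∘ u = v ∘ e` with `e` surjective fully
faithful and every fibre of `m` partially ordered, there is a unique monotone diagonal
`α` with `α ∘ e = u` and `m ∘ α = v`. -/
theorem stmt13 {A B C D : Type*}
    (ρ : A → A → Prop) (σ : B → B → Prop) (τ : C → C → Prop) (ψ : D → D → Prop)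
    (hρrefl : Reflexive ρ) (hρtrans : Transitive ρ)
    (hσrefl : Reflexive σ) (hσtrans : Transitive σ)
    (hτrefl : Reflexive τ) (hτtrans : Transitive τ)
    (hψrefl : Reflexive ψ) (hψtrans : Transitive ψ)
    (e : A → B) (hesurj : Function.Surjective e)
    (heff : ∀ a a' : A, ρ a a' ↔ σ (e a) (e a'))
    (m : C → D) (hm : ∀ c c' : C, τ c c' → ψ (m c) (m c'))
    (hmfib : ∀ c c' : C, m c = m c' → τ c c' → τ c' c → c = c')
    (u : A → C) (hu : ∀ a a' : A, ρ a a' → τ (u a) (u a'))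
    (v : B → D) (hv : ∀ b b' : B, σ b b' → ψ (v b) (v b'))
    (hcomm : ∀ a : A, m (u a) = v (e a)) :
    ∃! α : B → C, (∀ b b' : B, σ b b' → τ (α b) (α b')) ∧
      (∀ a : A, α (e a) = u a) ∧ ∀ b : B, m (α b) = v b :=
  stmt13_general ρ σ τ hσrefl e hesurj heff m hmfib u hu v hcomm
end

section
/- Let X be an Alexandrov-discrete topological space, Y a topological space, and f : X → Y a continuous map. Then the following are equivalent: (i) for all x, y ∈ X with f(x) = f(y), one has y ∈ closure({x}) (i.e., the kernel pair of f is contained in the specialization preorder of X); (ii) for every b ∈ Y, the fibre f⁻¹(b), with the subspace topology, has the trivial (indiscrete) topology, i.e., its only open subsets are ∅ and f⁻¹(b) itself. -/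
/-! A subspace is indiscrete exactly when any two of its points specialize to each other, so both
conditions say that any two points of a common fibre of `f` do. -/

open Set

section Indiscrete

variable {X : Type*} [TopologicalSpace X]

theorem indiscreteTopology_iff_forall_isOpen :
    IndiscreteTopology X ↔ ∀ U : Set X, IsOpen U → U = ∅ ∨ U = univ := by
  refine ⟨fun _ U => (IndiscreteTopology.isOpen_iff U).1, fun h => ⟨eq_top_iff.2 ?_⟩⟩
  exact TopologicalSpace.le_def.2 fun U hU => (TopologicalSpace.isOpen_top_iff U).2 (h U hU)

theorem indiscreteTopology_iff_forall_specializes :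
    IndiscreteTopology X ↔ ∀ x y : X, x ⤳ y := by
  rw [TopologicalSpace.indiscrete_iff_forall_inseparable]
  exact ⟨fun h x y => (h x y).specializes, fun h x y => (h x y).antisymm (h y x)⟩

theorem indiscreteTopology_subtype_iff {s : Set X} :
    IndiscreteTopology s ↔ ∀ x ∈ s, ∀ y ∈ s, x ⤳ y := by
  simp only [indiscreteTopology_iff_forall_specializes, subtype_specializes_iff, Subtype.forall]

end Indiscrete

theorem stmt16_general {X Y : Type*} [TopologicalSpace X] (f : X → Y) :
    (∀ x y : X, f x = f y → y ∈ closure ({x} : Set X)) ↔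
      ∀ b : Y, ∀ V : Set (f ⁻¹' {b}), IsOpen V → V = ∅ ∨ V = Set.univ := by
  simp only [← indiscreteTopology_iff_forall_isOpen, indiscreteTopology_subtype_iff,
    specializes_iff_mem_closure, mem_preimage, mem_singleton_iff]
  exact ⟨fun h b x hx y hy => h x y (hx.trans hy.symm), fun h x y hxy => h (f x) x rfl y hxy.symm⟩

/-- For a continuous map `f : X → Y` from an Alexandrov-discrete space, the kernel pair
of `f` is contained in the specialization preorder of `X` if and only if every fibre of
`f`, with the subspace topology, has the trivial (indiscrete) topology. -/
theorem stmt16 {X Y : Type*} [TopologicalSpace X] [TopologicalSpace Y]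
    [AlexandrovDiscrete X] (f : X → Y) (hf : Continuous f) :
    (∀ x y : X, f x = f y → y ∈ closure ({x} : Set X)) ↔
      ∀ b : Y, ∀ V : Set (f ⁻¹' {b}), IsOpen V → V = ∅ ∨ V = Set.univ :=
  stmt16_general f
end

section
/- Let X be a topological space with a partition topology (every open subset of X is closed), let Y be a T₀ topological space, and let f : X → Y be continuous. Then f identifies specialization-related points: for all x, y ∈ X with y ∈ closure({x}), one has f(x) = f(y). (This is the torsion–torsion-free condition of the pretorsion theory whose torsion part consists of partition-topology spaces and whose torsion-free part consists of T₀ spaces: every continuous map from a partition-topology space to a T₀ space factors through a discrete space, locally on specialization classes.) -/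
theorem R0Space.of_forall_isOpen_isClosed {X : Type*} [TopologicalSpace X]
    (hX : ∀ U : Set X, IsOpen U → IsClosed U) : R0Space X where
  specializes_symm.symm _ _ hxy :=
    specializes_iff_forall_open.2 fun U hU hxU => hxy.mem_closed (hX U hU) hxU

/-- Every continuous map from a space with a partition topology to a T₀ space identifies
specialization-related points. -/
theorem stmt18 {X Y : Type*} [TopologicalSpace X] [TopologicalSpace Y] [T0Space Y]
    (hX : ∀ U : Set X, IsOpen U → IsClosed U)
    (f : X → Y) (hf : Continuous f) :
    ∀ x y : X, y ∈ closure ({x} : Set X) → f x = f y := by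
  intro x y hy
  have := R0Space.of_forall_isOpen_isClosed hX
  exact ((specializes_iff_mem_closure.2 hy).inseparable.map hf).eq
end
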